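/- arXiv:2009.01621 — 4 statements merged into one kernel-verified Lean document; each statement's English description precedes it below -/
import Mathlib

section
/- Let u, ξ, ζ ∈ ℝ⁴, g the Minkowski metric, g(u,u) = −1, ξ timelike, ζ spacelike, and let Π(x,y) = g(x,y) + g(u,x)g(u,y). For any β with 0 ≤ β ≤ 1, the quadratic equation in Λ, (g(u, ζ + Λξ))² − β·Π(ζ + Λξ, ζ + Λξ) = 0, has leading coefficient (g(u,ξ))²(1−β) + β·(−g(ξ,ξ)) > 0 and its discriminant W := β[((g(u,ξ))² − Π(ξ,ξ))(Π(ζ,ζ) − (g(u,ζ))²) + (g(u,ξ)g(u,ζ) + Π(ξ,ζ))² + (1−β)(Π(ξ,ξ)Π(ζ,ζ) − Π(ξ,ζ)²)] is nonnegative; hence both roots Λ± are real. -/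
/-!
The unit vector `u` is timelike, so every vector `g`-orthogonal to it is spacelike or null; since
`Π(x, x) = g(x', x')` for the projection `x' = x + g(u, x) u` onto `u⊥`, the form `Π` is positive
semidefinite and hence satisfies Cauchy–Schwarz. The leading coefficient is a convex combination
of `g(u, ξ)² ≥ -g(ξ, ξ) > 0` and `-g(ξ, ξ)`, and both `W` and the discriminant are `β` times a sum
of the nonnegative terms `-g(ξ, ξ) g(ζ, ζ)`, a square, and `(1 - β)(Π(ξ,ξ)Π(ζ,ζ) - Π(ξ,ζ)²)`.
-/

/-- The Minkowski inner product on ℝ⁴ with signature (−,+,+,+). -/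
def mink (x y : Fin 4 → ℝ) : ℝ :=
  -(x 0 * y 0) + x 1 * y 1 + x 2 * y 2 + x 3 * y 3

/-- The projection bilinear form Π onto the orthogonal complement of u. -/
def minkProj (u x y : Fin 4 → ℝ) : ℝ :=
  mink x y + mink u x * mink u y

section Minkowski

variable (u x y : Fin 4 → ℝ) (t : ℝ)

theorem mink_comm : mink x y = mink y x := by
  simp only [mink]; ring

theorem mink_add_smul : mink u (y + t • x) = mink u y + t * mink u x := by
  simp only [mink, Pi.add_apply, Pi.smul_apply, smul_eq_mul]; ring

theorem mink_add_smul_self :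
    mink (y + t • x) (y + t • x) = mink y y + 2 * t * mink x y + t ^ 2 * mink x x := by
  simp only [mink, Pi.add_apply, Pi.smul_apply, smul_eq_mul]; ring

theorem minkProj_self : minkProj u x x = mink x x + mink u x ^ 2 := by
  rw [minkProj, sq]

theorem minkProj_add_smul_self :
    minkProj u (y + t • x) (y + t • x) =
      minkProj u x x * (t * t) + 2 * minkProj u x y * t + minkProj u y y := by
  simp only [minkProj]
  rw [mink_add_smul_self, mink_add_smul]; ring

variable {u x y}

theorem mink_self_nonneg_of_mink_eq_zero (hu : mink u u < 0) (h : mink u y = 0) :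
    0 ≤ mink y y := by
  simp only [mink] at *
  set s := u 1 ^ 2 + u 2 ^ 2 + u 3 ^ 2
  set n := y 1 ^ 2 + y 2 ^ 2 + y 3 ^ 2
  have cauchy_schwarz : (u 1 * y 1 + u 2 * y 2 + u 3 * y 3) ^ 2 ≤ s * n := by
    nlinarith [sq_nonneg (u 1 * y 2 - u 2 * y 1), sq_nonneg (u 1 * y 3 - u 3 * y 1),
      sq_nonneg (u 2 * y 3 - u 3 * y 2)]
  have hs : s < u 0 ^ 2 := by linarith
  have hs0 : 0 ≤ s := by positivity
  have hn : 0 ≤ n := by positivity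
  have key : u 0 ^ 2 * y 0 ^ 2 ≤ u 0 ^ 2 * n := calc
    u 0 ^ 2 * y 0 ^ 2 = (u 1 * y 1 + u 2 * y 2 + u 3 * y 3) ^ 2 := by
      rw [← mul_pow]; congr 1; linarith
    _ ≤ s * n := cauchy_schwarz
    _ ≤ u 0 ^ 2 * n := by gcongr
  have hy0 : y 0 ^ 2 ≤ n := le_of_mul_le_mul_left key (hs0.trans_lt hs)
  linarith

theorem minkProj_self_nonneg (hu : mink u u = -1) (x : Fin 4 → ℝ) : 0 ≤ minkProj u x x := by
  have horth : mink u (x + mink u x • u) = 0 := by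
    rw [mink_add_smul, hu]; ring
  have hproj : minkProj u x x = mink (x + mink u x • u) (x + mink u x • u) := by
    rw [mink_add_smul_self, minkProj_self, hu, mink_comm u x]; ring
  rw [hproj]
  exact mink_self_nonneg_of_mink_eq_zero (by linarith) horth

theorem minkProj_sq_le_mul (hu : mink u u = -1) (x y : Fin 4 → ℝ) :
    minkProj u x y ^ 2 ≤ minkProj u x x * minkProj u y y := by
  have hd := discrim_le_zero fun t ↦
    (minkProj_add_smul_self u x y t).symm ▸ minkProj_self_nonneg hu (y + t • x)
  rw [discrim] at hd
  linarith

end Minkowski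

/-- `W` for `a = g(u, ξ)`, `c = g(u, ζ)`, `P = Π(ξ, ξ)`, `Q = Π(ξ, ζ)`, `R = Π(ζ, ζ)`;
with `Q` replaced by `-Q` it is a quarter of the discriminant of the characteristic quadratic. -/
def charDiscr (β a c P Q R : ℝ) : ℝ :=
  β * ((a ^ 2 - P) * (R - c ^ 2) + (a * c + Q) ^ 2 + (1 - β) * (P * R - Q ^ 2))

theorem charDiscr_nonneg {β a c P Q R : ℝ} (hβ0 : 0 ≤ β) (hβ1 : β ≤ 1) (haP : 0 ≤ a ^ 2 - P)
    (hRc : 0 ≤ R - c ^ 2) (hQ : Q ^ 2 ≤ P * R) : 0 ≤ charDiscr β a c P Q R := by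
  unfold charDiscr
  exact mul_nonneg hβ0 <| add_nonneg (add_nonneg (mul_nonneg haP hRc) (sq_nonneg _))
    (mul_nonneg (by linarith) (by linarith))

theorem discrim_eq_four_mul_charDiscr (β a c P Q R : ℝ) :
    discrim (a ^ 2 - β * P) (2 * (a * c - β * Q)) (c ^ 2 - β * R) =
      4 * charDiscr β a c P (-Q) R := by
  rw [discrim, charDiscr]; ring

theorem exists_le_quadratic_eq_zero_of_discrim_nonneg {a b c : ℝ} (ha : 0 < a)
    (hd : 0 ≤ discrim a b c) :
    ∃ x₁ x₂ : ℝ, x₁ ≤ x₂ ∧ a * (x₁ * x₁) + b * x₁ + c = 0 ∧ a * (x₂ * x₂) + b * x₂ + c = 0 := by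
  have hs : discrim a b c = √(discrim a b c) * √(discrim a b c) := (Real.mul_self_sqrt hd).symm
  refine ⟨(-b - √(discrim a b c)) / (2 * a), (-b + √(discrim a b c)) / (2 * a), ?_,
    (quadratic_eq_zero_iff ha.ne' hs _).mpr (Or.inr rfl),
    (quadratic_eq_zero_iff ha.ne' hs _).mpr (Or.inl rfl)⟩
  gcongr
  linarith [Real.sqrt_nonneg (discrim a b c)]

theorem sq_mink_sub_mul_minkProj_add_smul (u x y : Fin 4 → ℝ) (β t : ℝ) :
    mink u (y + t • x) ^ 2 - β * minkProj u (y + t • x) (y + t • x) =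
      (mink u x ^ 2 - β * minkProj u x x) * (t * t)
        + 2 * (mink u x * mink u y - β * minkProj u x y) * t
        + (mink u y ^ 2 - β * minkProj u y y) := by
  rw [mink_add_smul, minkProj_add_smul_self]; ring

/-- For 0 ≤ β ≤ 1 the quadratic (u·(ζ+Λξ))² − β Π(ζ+Λξ,ζ+Λξ) in Λ has
positive leading coefficient, nonnegative discriminant W, and two real roots. -/
theorem characteristic_quadratic_real_roots (u ξ ζ : Fin 4 → ℝ) (β : ℝ)
    (hu : mink u u = -1) (hξ : mink ξ ξ < 0) (hζ : mink ζ ζ > 0)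
    (hβ0 : 0 ≤ β) (hβ1 : β ≤ 1) :
    0 < (mink u ξ) ^ 2 * (1 - β) + β * (-(mink ξ ξ)) ∧
    0 ≤ β * (((mink u ξ) ^ 2 - minkProj u ξ ξ) * (minkProj u ζ ζ - (mink u ζ) ^ 2)
        + (mink u ξ * mink u ζ + minkProj u ξ ζ) ^ 2
        + (1 - β) * (minkProj u ξ ξ * minkProj u ζ ζ - (minkProj u ξ ζ) ^ 2)) ∧
    ∃ Λ₁ Λ₂ : ℝ, Λ₁ ≤ Λ₂ ∧
      (mink u (ζ + Λ₁ • ξ)) ^ 2 - β * minkProj u (ζ + Λ₁ • ξ) (ζ + Λ₁ • ξ) = 0 ∧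
      (mink u (ζ + Λ₂ • ξ)) ^ 2 - β * minkProj u (ζ + Λ₂ • ξ) (ζ + Λ₂ • ξ) = 0 := by
  have hPξ := minkProj_self_nonneg hu ξ
  have hcs := minkProj_sq_le_mul hu ξ ζ
  have hξ' : mink u ξ ^ 2 - minkProj u ξ ξ = -mink ξ ξ := by rw [minkProj_self]; ring
  have hζ' : minkProj u ζ ζ - mink u ζ ^ 2 = mink ζ ζ := by rw [minkProj_self]; ring
  have hlead : 0 < mink u ξ ^ 2 * (1 - β) + β * -mink ξ ξ := by nlinarith
  have hlead_eq :
      mink u ξ ^ 2 - β * minkProj u ξ ξ = mink u ξ ^ 2 * (1 - β) + β * -mink ξ ξ := by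
    linear_combination β * hξ'
  have hdiscr : 0 ≤ discrim (mink u ξ ^ 2 - β * minkProj u ξ ξ)
      (2 * (mink u ξ * mink u ζ - β * minkProj u ξ ζ)) (mink u ζ ^ 2 - β * minkProj u ζ ζ) := by
    rw [discrim_eq_four_mul_charDiscr]
    exact mul_nonneg zero_le_four <|
      charDiscr_nonneg hβ0 hβ1 (by linarith) (by linarith) (neg_sq (minkProj u ξ ζ) ▸ hcs)
  refine ⟨hlead, charDiscr_nonneg hβ0 hβ1 (by linarith) (by linarith) hcs, ?_⟩
  obtain ⟨Λ₁, Λ₂, hle, h₁, h₂⟩ :=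
    exists_le_quadratic_eq_zero_of_discrim_nonneg (hlead_eq ▸ hlead) hdiscr
  exact ⟨Λ₁, Λ₂, hle, by rwa [sq_mink_sub_mul_minkProj_add_smul],
    by rwa [sq_mink_sub_mul_minkProj_add_smul]⟩
end

section
/- Let (a_n) be a sequence of nonnegative reals satisfying a_n ≤ 2^{−n} + a_{n−1}/4 + a_{n−2}/16 for all n ≥ 3. Then a_n ≤ (n−2)/2ⁿ + s₂/2ⁿ + a₂/2^{n−4} + a₁/2^{n−2} for all n ≥ 3, where s₂ is a fixed constant (one may take s₂ = a₂·2); in particular a_n → 0 and ∑ a_n < ∞. -/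
/-!
Multiplying by `2ⁿ` turns the recursive inequality into `bₙ₊₂ ≤ 1 + bₙ₊₁/2 + bₙ/4` for
`bₙ = 2ⁿ⁺¹ aₙ₊₁`. Since the weights `1/2` and `1/4` sum to less than `1`, a linear bound
`bₙ ≤ n + C` propagates from one step to the next, so `aₙ = O(n 2⁻ⁿ)`; summability then
follows by comparison with `∑ n 2⁻ⁿ`, and `aₙ → 0` from summability.
-/

theorem le_natCast_add_of_le_one_add_mul_add_mul {b : ℕ → ℝ} {p q C : ℝ}
    (hp : 0 ≤ p) (hq : 0 ≤ q) (hpq : p + q ≤ 1) (hC : 0 ≤ C)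
    (hrec : ∀ n, b (n + 2) ≤ 1 + p * b (n + 1) + q * b n)
    (h₀ : b 0 ≤ C) (h₁ : b 1 ≤ 1 + C) (n : ℕ) : b n ≤ n + C := by
  induction n using Nat.twoStepInduction with
  | zero => simpa using h₀
  | one => simpa [add_comm] using h₁
  | more n ih ih₁ =>
    have hnC : 0 ≤ (n : ℝ) + C := by positivity
    push_cast at ih₁ ⊢
    calc b (n + 2) ≤ 1 + p * (n + 1 + C) + q * (n + C) := by
          grw [hrec n, ih₁, ih]
      _ = 1 + p + (p + q) * (n + C) := by ring
      _ ≤ 1 + 1 + 1 * (n + C) := by gcongr; linarith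
      _ = n + 2 + C := by ring

theorem summable_natCast_add_div_two_pow (C : ℝ) :
    Summable fun n : ℕ => ((n : ℝ) + C) / 2 ^ n := by
  have hn : Summable fun n : ℕ => (n : ℝ) ^ 1 * (1 / 2 : ℝ) ^ n :=
    summable_pow_mul_geometric_of_norm_lt_one 1 (by norm_num)
  have hC : Summable fun n : ℕ => C * (1 / 2 : ℝ) ^ n := summable_geometric_two.mul_left C
  convert hn.add hC using 2 with n
  simp [div_eq_mul_inv, add_mul]

section IterationSequence

variable {a : ℕ → ℝ}

theorem two_pow_mul_le_of_le_rpow_neg_add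
    (hrec : ∀ n, 3 ≤ n → a n ≤ (2 : ℝ) ^ (-(n : ℝ)) + a (n - 1) / 4 + a (n - 2) / 16)
    (n : ℕ) :
    2 ^ (n + 3) * a (n + 3) ≤
      1 + 1 / 2 * (2 ^ (n + 2) * a (n + 2)) + 1 / 4 * (2 ^ (n + 1) * a (n + 1)) := by
  have h := hrec (n + 3) (by omega)
  rw [Real.rpow_neg zero_le_two, Real.rpow_natCast] at h
  simp only [show n + 3 - 1 = n + 2 by omega, show n + 3 - 2 = n + 1 by omega] at h
  calc 2 ^ (n + 3) * a (n + 3)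
      ≤ 2 ^ (n + 3) * (((2 : ℝ) ^ (n + 3))⁻¹ + a (n + 2) / 4 + a (n + 1) / 16) := by gcongr
    _ = _ := by field_simp; ring

theorem le_natCast_add_div_two_pow (hpos : ∀ n, 0 ≤ a n)
    (hrec : ∀ n, 3 ≤ n → a n ≤ (2 : ℝ) ^ (-(n : ℝ)) + a (n - 1) / 4 + a (n - 2) / 16)
    (n : ℕ) : a (n + 1) ≤ (n + (2 * a 1 + 4 * a 2)) / 2 ^ (n + 1) := by
  have h₁ := hpos 1
  have h₂ := hpos 2
  have hb := le_natCast_add_of_le_one_add_mul_add_mul (b := fun n => 2 ^ (n + 1) * a (n + 1))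
    (C := 2 * a 1 + 4 * a 2)
    (by norm_num) (by norm_num) (by norm_num) (by positivity)
    (two_pow_mul_le_of_le_rpow_neg_add hrec) (by norm_num; linarith) (by norm_num; linarith) n
  rw [le_div_iff₀ (by positivity), mul_comm]
  exact hb

end IterationSequence

open Filter in
/-- A nonnegative sequence with a_n ≤ 2⁻ⁿ + a_{n−1}/4 + a_{n−2}/16 admits an
explicit decaying bound; in particular it tends to 0 and is summable. -/
theorem iteration_sequence_summable (a : ℕ → ℝ) (hpos : ∀ n, 0 ≤ a n)
    (hrec : ∀ n, 3 ≤ n → a n ≤ (2 : ℝ) ^ (-(n : ℝ)) + a (n - 1) / 4 + a (n - 2) / 16) :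
    (∃ s₂ : ℝ, ∀ n : ℕ, 3 ≤ n →
        a n ≤ ((n : ℝ) - 2) / 2 ^ n + s₂ / 2 ^ n
          + a 2 * 2 ^ 4 / 2 ^ n + a 1 * 2 ^ 2 / 2 ^ n) ∧
      Tendsto a atTop (nhds 0) ∧ Summable a := by
  have hbound := le_natCast_add_div_two_pow hpos hrec
  have hsum : Summable a := by
    rw [← summable_nat_add_iff 1]
    refine ((summable_nat_add_iff 1).mpr
      (summable_natCast_add_div_two_pow (2 * a 1 + 4 * a 2))).of_nonneg_of_le
      (fun n => hpos _) fun n => (hbound n).trans ?_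
    gcongr
    linarith
  refine ⟨⟨1, fun n hn => ?_⟩, hsum.tendsto_atTop_zero, hsum⟩
  obtain ⟨m, rfl⟩ : ∃ m, n = m + 1 := ⟨n - 1, by omega⟩
  have h₁ := hpos 1
  have h₂ := hpos 2
  simp only [← add_div]
  refine (hbound m).trans (div_le_div_of_nonneg_right ?_ (by positivity))
  push_cast
  linarith
end

section
/- By induction: if nonnegative reals (a_n) satisfy a_n ≤ 2^{−n} + a_{n−1}/4 + a_{n−2}/16 for n ≥ 3, then a_n ≤ s_n/2^{2n−3} + F_n·a₂/2^{2n−4} + F_{n−1}·a₁/2^{2n−2} for all n ≥ 3, where F_n is the n-th Fibonacci number (F₀ = 0, F₁ = 1) and (s_n) is defined by s₁ = s₂ = 0 and s_n = 2^{n−3} + s_{n−1} + s_{n−2}. -/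
/-!
Multiplying by `4 ^ n` turns the hypothesis into `c n ≤ 2 ^ n + c (n - 1) + c (n - 2)` for
`c n = 4 ^ n * a n`, a Fibonacci recurrence with forcing `2 ^ n`. The right-hand side of the claim,
multiplied by `4 ^ n`, is `8 * s n + F n * c 2 + F (n - 1) * c 1`, which solves this recurrence
exactly for `n ≥ 4`; it dominates `c` at `n = 2, 3` because `c 1, c 2 ≥ 0`, hence for all `n ≥ 2`
by comparison.
-/

theorem le_of_fib_recurrence {α : Type*} [AddCommMonoid α] [PartialOrder α]
    [IsOrderedAddMonoid α] {u v f : ℕ → α} (h₀ : u 0 ≤ v 0) (h₁ : u 1 ≤ v 1)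
    (hu : ∀ n, u (n + 2) ≤ f n + u (n + 1) + u n)
    (hv : ∀ n, f n + v (n + 1) + v n ≤ v (n + 2)) (n : ℕ) : u n ≤ v n := by
  induction n using Nat.twoStepInduction with
  | zero => exact h₀
  | one => exact h₁
  | more n ih ih' => exact (hu n).trans ((add_le_add_three le_rfl ih' ih).trans (hv n))

theorem add_fib_mul_add_fib_mul_recurrence {R : Type*} [CommSemiring R] {w f : ℕ → R}
    (hw : ∀ n, w (n + 2) = f n + w (n + 1) + w n) (p q : R) (n : ℕ) :
    f n + (w (n + 1) + Nat.fib (n + 3) * p + Nat.fib (n + 2) * q)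
        + (w n + Nat.fib (n + 2) * p + Nat.fib (n + 1) * q) =
      w (n + 2) + Nat.fib (n + 4) * p + Nat.fib (n + 3) * q := by
  rw [hw, Nat.fib_add_two (n := n + 2), Nat.fib_add_two (n := n + 1)]
  push_cast
  ring

theorem four_pow_mul_le_of_le_two_rpow_neg {x y z : ℝ} (k : ℕ)
    (h : x ≤ (2 : ℝ) ^ (-((k + 2 : ℕ) : ℝ)) + y / 4 + z / 16) :
    4 ^ (k + 2) * x ≤ 2 ^ (k + 2) + 4 ^ (k + 1) * y + 4 ^ k * z := by
  rw [Real.rpow_neg zero_le_two, Real.rpow_natCast] at h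
  calc 4 ^ (k + 2) * x ≤ 4 ^ (k + 2) * ((2 ^ (k + 2))⁻¹ + y / 4 + z / 16) := by gcongr
    _ = 2 ^ (k + 2) + 4 ^ (k + 1) * y + 4 ^ k * z := by
      rw [show (4 : ℝ) = 2 ^ 2 by norm_num, ← pow_mul, ← pow_mul, ← pow_mul]
      field_simp
      ring

theorem le_of_four_pow_mul_le {x σ F G p q : ℝ} (k : ℕ)
    (h : 4 ^ (k + 3) * x ≤ 8 * σ + F * (16 * p) + G * (4 * q)) :
    x ≤ σ / 2 ^ (2 * k + 3) + F * p / 2 ^ (2 * k + 2) + G * q / 2 ^ (2 * k + 4) := by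
  rw [← mul_le_mul_iff_of_pos_left (by positivity : (0 : ℝ) < 4 ^ (k + 3))]
  refine h.trans_eq ?_
  rw [show (4 : ℝ) = 2 ^ 2 by norm_num, ← pow_mul]
  field_simp
  ring

/-- Inductive bound on the iteration error sequence in terms of the
Fibonacci numbers and the auxiliary sequence s_n. -/
theorem inductive_fibonacci_bound (a s : ℕ → ℝ) (hpos : ∀ n, 0 ≤ a n)
    (hrec : ∀ n, 3 ≤ n → a n ≤ (2 : ℝ) ^ (-(n : ℝ)) + a (n - 1) / 4 + a (n - 2) / 16)
    (hs1 : s 1 = 0) (hs2 : s 2 = 0)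
    (hsrec : ∀ n, 3 ≤ n → s n = 2 ^ (n - 3) + s (n - 1) + s (n - 2)) :
    ∀ n, 3 ≤ n →
      a n ≤ s n / 2 ^ (2 * n - 3) + (Nat.fib n : ℝ) * a 2 / 2 ^ (2 * n - 4)
        + (Nat.fib (n - 1) : ℝ) * a 1 / 2 ^ (2 * n - 2) := by
  have hc (k : ℕ) :
      4 ^ (k + 3) * a (k + 3) ≤ 2 ^ (k + 3) + 4 ^ (k + 2) * a (k + 2) + 4 ^ (k + 1) * a (k + 1) :=
    four_pow_mul_le_of_le_two_rpow_neg (k + 1) (by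
      convert hrec (k + 3) (by omega) using 4
      · push_cast; ring
      · omega)
  have hs (k : ℕ) : s (k + 3) = 2 ^ k + s (k + 2) + s (k + 1) := by
    simpa using hsrec (k + 3) (by omega)
  have h₂ : 4 ^ 2 * a 2 ≤ 8 * s 2 + Nat.fib 2 * (16 * a 2) + Nat.fib 1 * (4 * a 1) := by
    norm_num [hs2]
    linarith [hpos 1]
  have h₃ : 4 ^ 3 * a 3 ≤ 8 * s 3 + Nat.fib 3 * (16 * a 2) + Nat.fib 2 * (4 * a 1) := by
    have := hc 0
    norm_num [hs 0, hs1, hs2] at this ⊢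
    linarith [hpos 2]
  have h8s (k : ℕ) : 8 * s (k + 4) = 2 ^ (k + 4) + 8 * s (k + 3) + 8 * s (k + 2) := by
    rw [hs (k + 1)]
    ring
  have key := le_of_fib_recurrence (u := fun k ↦ 4 ^ (k + 2) * a (k + 2))
    (v := fun k ↦ 8 * s (k + 2) + Nat.fib (k + 2) * (16 * a 2) + Nat.fib (k + 1) * (4 * a 1))
    (f := fun k ↦ 2 ^ (k + 4)) h₂ h₃ (fun k ↦ hc (k + 1))
    (fun k ↦ (add_fib_mul_add_fib_mul_recurrence (w := fun k ↦ 8 * s (k + 2)) h8s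
      (16 * a 2) (4 * a 1) k).le)
  intro n hn
  obtain ⟨k, rfl⟩ : ∃ k, n = k + 3 := ⟨n - 3, by omega⟩
  rw [show 2 * (k + 3) - 3 = 2 * k + 3 by omega, show 2 * (k + 3) - 4 = 2 * k + 2 by omega,
    show 2 * (k + 3) - 2 = 2 * k + 4 by omega, show k + 3 - 1 = k + 2 by omega]
  exact le_of_four_pow_mul_le k (key (k + 1))
end

section
/- Let λ, η, χ₁, χ₂, χ₃, χ₄, cₛ² be positive reals satisfying: λχ₁ + cₛ²λ(χ₄ − 4η/3) ≥ cₛ²λχ₂ + λχ₃ + χ₂χ₃ − χ₁(χ₄ − 4η/3) ≥ 0 and 2λχ₁ ≥ λχ₂cₛ² − χ₁(χ₄ − 4η/3) + λχ₃ + χ₃χ₂, and Δ > 0 where Δ = 9λ²χ₂²cₛ⁴ + 6λcₛ²(χ₁(4η − 3χ₄)(2λ + χ₂) + 3χ₂χ₃(λ + χ₂)) + (χ₁(4η − 3χ₄) + 3χ₃(λ + χ₂))². Then β₊ := (3λχ₂cₛ² + χ₁(4η − 3χ₄) + 3χ₃(λ + χ₂) + √Δ)/(6λχ₁) ≤ 1.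 -/
/-!
Write `S = 3λχ₂cₛ² + χ₁(4η − 3χ₄) + 3χ₃(λ + χ₂)` and `T = 6λχ₁`, so that `β₊ = (S + √Δ)/T`.
Expanding the square shows `Δ = S² + T · 2λcₛ²(4η − 3χ₄)`, while `(T − S)² = S² + T(T − 2S)`.
Hence `√Δ ≤ T − S` follows by squaring: `T − S ≥ 0` is the second causality condition and
`2λcₛ²(4η − 3χ₄) ≤ T − 2S` is three times the upper inequality of the first one.
-/

theorem le_sub_sq_of_eq_sq_add_mul {Δ S T E : ℝ} (hT : 0 ≤ T) (hΔ : Δ = S ^ 2 + T * E)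
    (hE : E ≤ T - 2 * S) : Δ ≤ (T - S) ^ 2 := by
  have : T * E ≤ T * (T - 2 * S) := mul_le_mul_of_nonneg_left hE hT
  linarith

theorem add_sqrt_div_le_one {Δ S T : ℝ} (hT : 0 < T) (hST : S ≤ T) (hΔ : Δ ≤ (T - S) ^ 2) :
    (S + √Δ) / T ≤ 1 := by
  have hsqrt : √Δ ≤ T - S := Real.sqrt_le_iff.mpr ⟨by linarith, hΔ⟩
  rw [div_le_one hT]
  linarith

theorem beta_plus_le_one_general (lam η χ₁ χ₂ χ₃ χ₄ cs2 : ℝ)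
    (hlam : 0 < lam) (hχ₁ : 0 < χ₁)
    (Δ : ℝ)
    (hΔdef : Δ = 9 * lam ^ 2 * χ₂ ^ 2 * cs2 ^ 2
      + 6 * lam * cs2 * (χ₁ * (4 * η - 3 * χ₄) * (2 * lam + χ₂)
          + 3 * χ₂ * χ₃ * (lam + χ₂))
      + (χ₁ * (4 * η - 3 * χ₄) + 3 * χ₃ * (lam + χ₂)) ^ 2)
    (h1a : cs2 * lam * χ₂ + lam * χ₃ + χ₂ * χ₃ - χ₁ * (χ₄ - 4 * η / 3)
      ≤ lam * χ₁ + cs2 * lam * (χ₄ - 4 * η / 3))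
    (h2 : lam * χ₂ * cs2 - χ₁ * (χ₄ - 4 * η / 3) + lam * χ₃ + χ₃ * χ₂
      ≤ 2 * lam * χ₁) :
    (3 * lam * χ₂ * cs2 + χ₁ * (4 * η - 3 * χ₄) + 3 * χ₃ * (lam + χ₂)
        + Real.sqrt Δ) / (6 * lam * χ₁) ≤ 1 := by
  set S := 3 * lam * χ₂ * cs2 + χ₁ * (4 * η - 3 * χ₄) + 3 * χ₃ * (lam + χ₂) with hS
  have hT : 0 < 6 * lam * χ₁ := by positivity
  have hST : S ≤ 6 * lam * χ₁ := by linarith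
  have hΔS : Δ = S ^ 2 + 6 * lam * χ₁ * (2 * lam * cs2 * (4 * η - 3 * χ₄)) := by
    rw [hΔdef, hS]; ring
  have hE : 2 * lam * cs2 * (4 * η - 3 * χ₄) ≤ 6 * lam * χ₁ - 2 * S := by linarith
  exact add_sqrt_div_le_one hT hST (le_sub_sq_of_eq_sq_add_mul hT.le hΔS hE)

/-- Under the causality conditions of the paper, the largest characteristic
speed squared β₊ is at most 1. -/
theorem beta_plus_le_one (lam η χ₁ χ₂ χ₃ χ₄ cs2 : ℝ)
    (hlam : 0 < lam) (hη : 0 < η) (hχ₁ : 0 < χ₁) (hχ₂ : 0 < χ₂)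
    (hχ₃ : 0 < χ₃) (hχ₄ : 0 < χ₄) (hcs : 0 < cs2)
    (Δ : ℝ)
    (hΔdef : Δ = 9 * lam ^ 2 * χ₂ ^ 2 * cs2 ^ 2
      + 6 * lam * cs2 * (χ₁ * (4 * η - 3 * χ₄) * (2 * lam + χ₂)
          + 3 * χ₂ * χ₃ * (lam + χ₂))
      + (χ₁ * (4 * η - 3 * χ₄) + 3 * χ₃ * (lam + χ₂)) ^ 2)
    (hΔ : 0 < Δ)
    (h1a : cs2 * lam * χ₂ + lam * χ₃ + χ₂ * χ₃ - χ₁ * (χ₄ - 4 * η / 3)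
      ≤ lam * χ₁ + cs2 * lam * (χ₄ - 4 * η / 3))
    (h1b : 0 ≤ cs2 * lam * χ₂ + lam * χ₃ + χ₂ * χ₃ - χ₁ * (χ₄ - 4 * η / 3))
    (h2 : lam * χ₂ * cs2 - χ₁ * (χ₄ - 4 * η / 3) + lam * χ₃ + χ₃ * χ₂
      ≤ 2 * lam * χ₁) :
    (3 * lam * χ₂ * cs2 + χ₁ * (4 * η - 3 * χ₄) + 3 * χ₃ * (lam + χ₂)
        + Real.sqrt Δ) / (6 * lam * χ₁) ≤ 1 :=
  beta_plus_le_one_general lam η χ₁ χ₂ χ₃ χ₄ cs2 hlam hχ₁ Δ hΔdef h1a h2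
end
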